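/- First self-intersection of a projective curve forces a vanishing solution: let f : [0,T) → ℝP¹ be continuous, smooth and immersive on (0,T), with Schwarzian derivative 2q where q(t) = −3/(4t²) + q̃(t) for some q̃ continuous on [0,T). If f(0) = f(t*) for some t* ∈ (0,T), then there exists a nontrivial solution u of u'' + q·u = 0 on (0,T) with lim_{t→0⁺} u(t) = 0 and u(t*) = 0. -/

import Mathlib

/-!
Put `U = u₂(t*) u₁ - u₁(t*) u₂`, a solution vanishing at `t*`. Near `0` we have `q < 0`, so the
Bôcher solutions `g₁ ~ t^{3/2}`, `g₂ ~ t^{-1/2}` are positive there with strictly increasing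
derivatives. Constancy of Wronskians then gives `uᵢ = αᵢ g₁ + βᵢ g₂` near `0`, whence
`t^{1/2} (u₁, u₂) → (β₁, β₂) ≠ 0` and `f(t) → [β₁ : β₂]`. As `f(0) = f(t*) = [u₁(t*) : u₂(t*)]`,
the `g₂`-coefficient of `U` vanishes, so `U` is a multiple of `g₁` near `0` and tends to `0`.
-/

/-- The real projective line carries the quotient topology from `ℝ² \\ {0}`. -/
noncomputable instance : TopologicalSpace (Projectivization ℝ (ℝ × ℝ)) :=
  inferInstanceAs (TopologicalSpace (Quotient (projectivizationSetoid ℝ (ℝ × ℝ))))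

open Set Filter Topology

theorem sq_fst_add_sq_snd_pos {v : ℝ × ℝ} (hv : v ≠ 0) : 0 < v.1 ^ 2 + v.2 ^ 2 := by
  refine lt_of_le_of_ne (by positivity) fun h => hv ?_
  obtain ⟨h₁, h₂⟩ :=
    (mul_self_add_mul_self_eq_zero (a := v.1) (b := v.2)).1 (by linear_combination -h)
  exact Prod.ext h₁ h₂

noncomputable def crossSqDiv (p v : ℝ × ℝ) : ℝ :=
  (p.1 * v.2 - p.2 * v.1) ^ 2 / (v.1 ^ 2 + v.2 ^ 2)

theorem crossSqDiv_smul (p v : ℝ × ℝ) {c : ℝ} (hc : c ≠ 0) (hv : v ≠ 0) :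
    crossSqDiv p (c • v) = crossSqDiv p v := by
  have := sq_fst_add_sq_snd_pos hv
  simp only [crossSqDiv, Prod.smul_fst, Prod.smul_snd, smul_eq_mul]
  field_simp

@[simp]
theorem crossSqDiv_self (p : ℝ × ℝ) : crossSqDiv p p = 0 := by
  simp [crossSqDiv, mul_comm]

theorem continuousAt_crossSqDiv (p : ℝ × ℝ) {v : ℝ × ℝ} (hv : v ≠ 0) :
    ContinuousAt (crossSqDiv p) v :=
  (by fun_prop : Continuous fun w : ℝ × ℝ => (p.1 * w.2 - p.2 * w.1) ^ 2).continuousAt.div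
    (by fun_prop) (sq_fst_add_sq_snd_pos hv).ne'

/-- Lets limits in `ℝP¹` be compared through real numbers, as the quotient topology comes
without a Hausdorff instance. -/
noncomputable def projCrossSqDiv (p : ℝ × ℝ) : Projectivization ℝ (ℝ × ℝ) → ℝ :=
  Projectivization.lift (fun v => crossSqDiv p v) <| by
    rintro ⟨_, ha⟩ ⟨b, hb⟩ t rfl
    exact crossSqDiv_smul p b (by rintro rfl; simp at ha) hb

theorem continuous_projCrossSqDiv (p : ℝ × ℝ) : Continuous (projCrossSqDiv p) :=
  Continuous.quotient_lift (continuous_iff_continuousAt.2 fun v =>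
    (continuousAt_crossSqDiv p v.2).comp continuous_subtype_val.continuousAt) _

theorem cross_eq_zero_of_tendsto_mk {α : Type*} {l : Filter α} [l.NeBot]
    {f : α → Projectivization ℝ (ℝ × ℝ)} {x : α → ℝ × ℝ} {c : α → ℝ} {p v : ℝ × ℝ}
    (hp : p ≠ 0) (hv : v ≠ 0) (hf : Tendsto f l (𝓝 (Projectivization.mk ℝ p hp)))
    (hrep : ∀ᶠ t in l, ∃ h : x t ≠ 0, f t = Projectivization.mk ℝ (x t) h)
    (hc : ∀ᶠ t in l, c t ≠ 0) (hcx : Tendsto (fun t => c t • x t) l (𝓝 v)) :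
    p.1 * v.2 - p.2 * v.1 = 0 := by
  have h₀ : Tendsto (fun t => projCrossSqDiv p (f t)) l (𝓝 (crossSqDiv p p)) :=
    ((continuous_projCrossSqDiv p).tendsto _).comp hf
  have h₁ : Tendsto (fun t => projCrossSqDiv p (f t)) l (𝓝 (crossSqDiv p v)) := by
    refine ((continuousAt_crossSqDiv p hv).tendsto.comp hcx).congr' ?_
    filter_upwards [hrep, hc] with t ⟨hx, hfx⟩ hct
    rw [hfx, Function.comp_apply, crossSqDiv_smul p _ hct hx]
    rfl
  have h := tendsto_nhds_unique h₁ h₀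
  rw [crossSqDiv_self, crossSqDiv, div_eq_zero_iff] at h
  exact pow_eq_zero_iff two_ne_zero |>.1 (h.resolve_right (sq_fst_add_sq_snd_pos hv).ne')

noncomputable def wronskian (y z : ℝ → ℝ) (t : ℝ) : ℝ := y t * deriv z t - z t * deriv y t

theorem wronskian_mul_sub_wronskian_mul (g y z : ℝ → ℝ) (t : ℝ) :
    wronskian g z t * y t - wronskian g y t * z t = g t * wronskian y z t := by
  simp only [wronskian]
  ring

theorem wronskian_eq_zero_of_eventuallyEq_mul {y z g : ℝ → ℝ} {a b c : ℝ}
    (hy : y =ᶠ[𝓝 c] fun t => a * g t) (hz : z =ᶠ[𝓝 c] fun t => b * g t) :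
    wronskian y z c = 0 := by
  simp only [wronskian, hy.eq_of_nhds, hz.eq_of_nhds, hy.deriv_eq, hz.deriv_eq,
    deriv_const_mul_field']
  ring

theorem coeff_pair_ne_zero_of_wronskian_ne_zero {u₁ u₂ g₁ g₂ : ℝ → ℝ} {α₁ β₁ α₂ β₂ c : ℝ}
    (hW : wronskian u₁ u₂ c ≠ 0) (h₁ : ∀ᶠ t in 𝓝 c, u₁ t = α₁ * g₁ t + β₁ * g₂ t)
    (h₂ : ∀ᶠ t in 𝓝 c, u₂ t = α₂ * g₁ t + β₂ * g₂ t) : (β₁, β₂) ≠ 0 := by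
  rintro hβ
  obtain ⟨rfl, rfl⟩ := Prod.mk_eq_zero.1 hβ
  exact hW (wronskian_eq_zero_of_eventuallyEq_mul (a := α₁) (b := α₂) (g := g₁)
    (h₁.mono fun t ht => by simp [ht]) (h₂.mono fun t ht => by simp [ht]))

theorem wronskian_eq_zero_of_eventually_linearCombination_eq_zero {y z : ℝ → ℝ} {a b c : ℝ}
    (hab : (a, b) ≠ 0) (h : ∀ᶠ t in 𝓝 c, a * y t + b * z t = 0) : wronskian y z c = 0 := by
  by_cases ha : a = 0
  · have hb : b ≠ 0 := fun hb => hab (by rw [ha, hb]; rfl)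
    refine wronskian_eq_zero_of_eventuallyEq_mul (a := 1) (b := 0) (g := y)
      (.of_forall fun t => (one_mul _).symm) ?_
    filter_upwards [h] with t ht
    simpa [ha, hb] using ht
  · refine wronskian_eq_zero_of_eventuallyEq_mul (a := -b / a) (b := 1) (g := z) ?_
      (.of_forall fun t => (one_mul _).symm)
    filter_upwards [h] with t ht
    field_simp
    linear_combination ht

/-- Solutions of Hill's equation `y'' + q y = 0` on `s`, read through `deriv`: as `deriv` is `0`
where `y` is not differentiable, `y` itself is only asked to be differentiable off a countable set. -/
structure HillSolutionOn (q : ℝ → ℝ) (s : Set ℝ) (y : ℝ → ℝ) : Prop where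
  continuousOn : ContinuousOn y s
  hasDerivAt_deriv : ∀ t ∈ s, HasDerivAt (deriv y) (-(q t * y t)) t
  countable_not_differentiableAt : {t ∈ s | ¬ DifferentiableAt ℝ y t}.Countable

namespace HillSolutionOn

variable {q y z : ℝ → ℝ} {s : Set ℝ}

theorem mono {s' : Set ℝ} (hy : HillSolutionOn q s y) (hs' : s' ⊆ s) : HillSolutionOn q s' y where
  continuousOn := hy.continuousOn.mono hs'
  hasDerivAt_deriv t ht := hy.hasDerivAt_deriv t (hs' ht)
  countable_not_differentiableAt :=
    hy.countable_not_differentiableAt.mono fun _ ht => And.imp_left (@hs' _) ht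

theorem of_contDiffOn (hs : IsOpen s) (hy : ContDiffOn ℝ 2 y s)
    (hode : ∀ t ∈ s, deriv (deriv y) t + q t * y t = 0) : HillSolutionOn q s y where
  continuousOn := hy.continuousOn
  hasDerivAt_deriv t ht := by
    have hd := ((hy.deriv_of_isOpen hs (by norm_num : (1 : WithTop ℕ∞) + 1 ≤ 2)).differentiableOn
      one_ne_zero).differentiableAt (hs.mem_nhds ht)
    exact hd.hasDerivAt.congr_deriv (by linarith [hode t ht])
  countable_not_differentiableAt := by
    convert countable_empty
    refine eq_empty_of_forall_notMem fun t ht => ht.2 ?_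
    exact (hy.differentiableOn two_ne_zero).differentiableAt (hs.mem_nhds ht.1)

/-- Where `q y < 0` the equation makes `deriv y` strictly increasing, so `deriv y` vanishes at most
once, and `y` is differentiable wherever `deriv y ≠ 0`. -/
theorem of_mul_neg (hs : IsOpen s) (hconv : Convex ℝ s) (hy : ContinuousOn y s)
    (hode : ∀ t ∈ s, deriv (deriv y) t + q t * y t = 0) (hneg : ∀ t ∈ s, q t * y t < 0) :
    HillSolutionOn q s y := by
  have hy'' : ∀ t ∈ s, deriv (deriv y) t = -(q t * y t) := fun t ht => by linarith [hode t ht]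
  have hd : ∀ t ∈ s, HasDerivAt (deriv y) (-(q t * y t)) t := fun t ht =>
    (differentiableAt_of_deriv_ne_zero (by linarith [hy'' t ht, hneg t ht])).hasDerivAt.congr_deriv
      (hy'' t ht)
  have hmono : StrictMonoOn (deriv y) s := by
    refine strictMonoOn_of_deriv_pos hconv (fun t ht => (hd t ht).continuousAt.continuousWithinAt)
      fun t ht => ?_
    rw [hs.interior_eq] at ht
    linarith [(hd t ht).deriv, hneg t ht]
  refine ⟨hy, hd, Set.Subsingleton.countable fun t ht t' ht' => hmono.injOn ht.1 ht'.1 ?_⟩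
  rw [deriv_zero_of_not_differentiableAt ht.2, deriv_zero_of_not_differentiableAt ht'.2]

theorem hasDerivAt_wronskian (hy : HillSolutionOn q s y) (hz : HillSolutionOn q s z) {t : ℝ}
    (ht : t ∈ s) (hyt : DifferentiableAt ℝ y t) (hzt : DifferentiableAt ℝ z t) :
    HasDerivAt (wronskian y z) 0 t :=
  (hyt.hasDerivAt.mul (hz.hasDerivAt_deriv t ht)).sub
    (hzt.hasDerivAt.mul (hy.hasDerivAt_deriv t ht)) |>.congr_deriv (by ring)

theorem continuousOn_deriv (hy : HillSolutionOn q s y) : ContinuousOn (deriv y) s :=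
  fun t ht => (hy.hasDerivAt_deriv t ht).continuousAt.continuousWithinAt

theorem wronskian_eq (hs : s.OrdConnected) (hy : HillSolutionOn q s y) (hz : HillSolutionOn q s z)
    {a b : ℝ} (ha : a ∈ s) (hb : b ∈ s) : wronskian y z a = wronskian y z b := by
  have hab := hs.uIcc_subset ha hb
  have hcont : ContinuousOn (wronskian y z) s :=
    (hy.continuousOn.mul hz.continuousOn_deriv).sub (hz.continuousOn.mul hy.continuousOn_deriv)
  have hderiv : ∀ t ∈ Ioo (min a b) (max a b) \ ({t ∈ s | ¬ DifferentiableAt ℝ y t} ∪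
      {t ∈ s | ¬ DifferentiableAt ℝ z t}), HasDerivAt (wronskian y z) 0 t := by
    rintro t ⟨ht, hnot⟩
    have hts : t ∈ s := hab (Ioo_subset_Icc_self ht)
    exact hy.hasDerivAt_wronskian hz hts (by_contra fun h => hnot (.inl ⟨hts, h⟩))
      (by_contra fun h => hnot (.inr ⟨hts, h⟩))
  have := MeasureTheory.integral_eq_of_hasDerivAt_off_countable (wronskian y z) 0
    (hy.countable_not_differentiableAt.union hz.countable_not_differentiableAt) (hcont.mono hab)
    hderiv intervalIntegrable_const
  simp only [Pi.zero_apply, intervalIntegral.integral_zero] at this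
  linarith

/-- A solution is a combination of two solutions with nonvanishing Wronskian, by
`W(u, g₂) g₁ - W(u, g₁) g₂ = u W(g₁, g₂)` with all three Wronskians constant. -/
theorem exists_eqOn_linearCombination {u g₁ g₂ : ℝ → ℝ} (hs : s.OrdConnected)
    (hu : HillSolutionOn q s u) (hg₁ : HillSolutionOn q s g₁) (hg₂ : HillSolutionOn q s g₂)
    {c : ℝ} (hc : c ∈ s) (hW : wronskian g₁ g₂ c ≠ 0) :
    ∃ α β : ℝ, ∀ t ∈ s, u t = α * g₁ t + β * g₂ t := by
  refine ⟨wronskian u g₂ c / wronskian g₁ g₂ c, -(wronskian u g₁ c / wronskian g₁ g₂ c),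
    fun t ht => ?_⟩
  have key := wronskian_mul_sub_wronskian_mul u g₁ g₂ t
  rw [wronskian_eq hs hu hg₂ ht hc, wronskian_eq hs hu hg₁ ht hc,
    wronskian_eq hs hg₁ hg₂ ht hc] at key
  field_simp
  linear_combination -key

theorem eventually_Ioo {a b : ℝ} (hab : a < b) (hy : HillSolutionOn q (Ioo a b) y) :
    ∀ᶠ ε in 𝓝[>] a, HillSolutionOn q (Ioo a ε) y :=
  eventually_of_mem (Ioo_mem_nhdsGT hab) fun _ hε => hy.mono (Ioo_subset_Ioo_right hε.2.le)

end HillSolutionOn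

theorem deriv_deriv_linearCombination {s : Set ℝ} (hs : IsOpen s) {u v : ℝ → ℝ}
    (hu : ContDiffOn ℝ 2 u s) (hv : ContDiffOn ℝ 2 v s) (a b : ℝ) {t : ℝ} (ht : t ∈ s) :
    deriv (deriv fun x => a * u x + b * v x) t = a * deriv (deriv u) t + b * deriv (deriv v) t := by
  have hdiff {w : ℝ → ℝ} (hw : ContDiffOn ℝ 2 w s) {x : ℝ} (hx : x ∈ s) :
      DifferentiableAt ℝ w x ∧ DifferentiableAt ℝ (deriv w) x :=
    ⟨(hw.differentiableOn two_ne_zero).differentiableAt (hs.mem_nhds hx),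
      ((hw.deriv_of_isOpen hs (by norm_num : (1 : WithTop ℕ∞) + 1 ≤ 2)).differentiableOn
        one_ne_zero).differentiableAt (hs.mem_nhds hx)⟩
  have hderiv : deriv (fun x => a * u x + b * v x) =ᶠ[𝓝 t]
      fun x => a * deriv u x + b * deriv v x := by
    filter_upwards [hs.mem_nhds ht] with x hx
    exact (((hdiff hu hx).1.hasDerivAt.const_mul a).add
      ((hdiff hv hx).1.hasDerivAt.const_mul b)).deriv
  rw [hderiv.deriv_eq]
  exact (((hdiff hu ht).2.hasDerivAt.const_mul a).add
    ((hdiff hv ht).2.hasDerivAt.const_mul b)).deriv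

theorem tendsto_nhdsGT_zero_of_eq_rpow_mul {u h : ℝ → ℝ} {p L : ℝ} (hp : 0 < p)
    (hu : ∀ᶠ t in 𝓝[>] 0, u t = t ^ p * h t) (hh : Tendsto h (𝓝[>] 0) (𝓝 L)) :
    Tendsto u (𝓝[>] 0) (𝓝 0) := by
  have hpow : Tendsto (fun t : ℝ => t ^ p) (𝓝[>] 0) (𝓝 0) := by
    simpa [Real.zero_rpow hp.ne'] using
      (Real.continuousAt_rpow_const 0 p (.inr hp.le)).tendsto.mono_left nhdsWithin_le_nhds
  simpa using (hpow.mul hh).congr' (hu.mono fun t ht => ht.symm)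

theorem eventually_neg_of_eq_neg_div_sq_add {q r : ℝ → ℝ} {c L : ℝ} (hc : 0 < c)
    (hq : ∀ᶠ t in 𝓝[>] 0, q t = -c / t ^ 2 + r t) (hr : Tendsto r (𝓝[>] 0) (𝓝 L)) :
    ∀ᶠ t in 𝓝[>] 0, q t < 0 := by
  have hlim : Tendsto (fun t => -c + t ^ 2 * r t) (𝓝[>] 0) (𝓝 (-c + 0)) :=
    tendsto_const_nhds.add <| tendsto_nhdsGT_zero_of_eq_rpow_mul (p := 2) two_pos
      (.of_forall fun t => by norm_cast) hr
  filter_upwards [hq, hlim.eventually (gt_mem_nhds (show -c + 0 < 0 by linarith)),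
    self_mem_nhdsWithin] with t hqt hneg (ht : 0 < t)
  rw [hqt, show -c / t ^ 2 + r t = (-c + t ^ 2 * r t) / t ^ 2 by field_simp]
  exact div_neg_of_neg_of_pos hneg (by positivity)

theorem eventually_hillSolutionOn_Ioo_of_eq_rpow_mul {q g gt : ℝ → ℝ} {T p : ℝ} (hT : 0 < T)
    (hq : ∀ᶠ t in 𝓝[>] 0, q t < 0) (hode : ∀ t ∈ Ioo 0 T, deriv (deriv g) t + q t * g t = 0)
    (hg : ∀ t ∈ Ioo 0 T, g t = t ^ p * gt t) (hgt : ContinuousOn gt (Ico 0 T)) (hgt0 : 0 < gt 0) :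
    ∀ᶠ ε in 𝓝[>] 0, HillSolutionOn q (Ioo 0 ε) g := by
  have hgt_pos : ∀ᶠ t in 𝓝[>] 0, 0 < gt t :=
    ((hgt 0 ⟨le_rfl, hT⟩).mono_of_mem_nhdsWithin (Ico_mem_nhdsGT hT)).eventually
      (eventually_gt_nhds hgt0)
  obtain ⟨ε, hε, hsub⟩ := mem_nhdsGT_iff_exists_Ioo_subset.1
    (inter_mem (Ioo_mem_nhdsGT hT) (hq.and hgt_pos))
  have hεT : Ioo 0 ε ⊆ Ioo 0 T := fun t ht => (hsub ht).1
  have hcont : ContinuousOn g (Ioo 0 ε) := by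
    refine ContinuousOn.congr (fun t ht => ?_) fun t ht => hg t (hεT ht)
    exact ((Real.continuousAt_rpow_const t p (.inl ht.1.ne')).mul
      (hgt.continuousAt (Ico_mem_nhds ht.1 (hεT ht).2))).continuousWithinAt
  have hsol : HillSolutionOn q (Ioo 0 ε) g :=
    .of_mul_neg isOpen_Ioo (convex_Ioo 0 ε) hcont (fun t ht => hode t (hεT ht)) fun t ht =>
      mul_neg_of_neg_of_pos (hsub ht).2.1
        (by rw [hg t (hεT ht)]; exact mul_pos (Real.rpow_pos_of_pos ht.1 p) (hsub ht).2.2)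
  exact hsol.eventually_Ioo hε

theorem tendsto_sqrt_mul_of_eq_add {u g₁ g₂ gt₁ gt₂ : ℝ → ℝ} {α β L : ℝ}
    (hu : ∀ᶠ t in 𝓝[>] 0, u t = α * g₁ t + β * g₂ t)
    (hg₁ : ∀ᶠ t in 𝓝[>] 0, g₁ t = t ^ ((3 : ℝ) / 2) * gt₁ t)
    (hg₂ : ∀ᶠ t in 𝓝[>] 0, g₂ t = t ^ (-(1 : ℝ) / 2) * gt₂ t)
    (hgt₁ : Tendsto gt₁ (𝓝[>] 0) (𝓝 L)) (hgt₂ : Tendsto gt₂ (𝓝[>] 0) (𝓝 1)) :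
    Tendsto (fun t => t ^ ((1 : ℝ) / 2) * u t) (𝓝[>] 0) (𝓝 β) := by
  have hα : Tendsto (fun t => t ^ (2 : ℝ) * (α * gt₁ t)) (𝓝[>] 0) (𝓝 0) :=
    tendsto_nhdsGT_zero_of_eq_rpow_mul two_pos (.of_forall fun _ => rfl) (hgt₁.const_mul α)
  have hlim : Tendsto (fun t => t ^ (2 : ℝ) * (α * gt₁ t) + β * gt₂ t) (𝓝[>] 0) (𝓝 β) := by
    simpa using hα.add (hgt₂.const_mul β)
  refine hlim.congr' ?_
  filter_upwards [hu, hg₁, hg₂, self_mem_nhdsWithin] with t hut hg₁t hg₂t (ht : 0 < t)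
  have h₁ : t ^ ((1 : ℝ) / 2) * t ^ ((3 : ℝ) / 2) = t ^ (2 : ℝ) := by
    rw [← Real.rpow_add ht]; norm_num
  have h₂ : t ^ ((1 : ℝ) / 2) * t ^ (-(1 : ℝ) / 2) = 1 := by
    rw [← Real.rpow_add ht]; norm_num
  rw [hut, hg₁t, hg₂t]
  linear_combination (-α * gt₁ t) * h₁ - β * gt₂ t * h₂

theorem exists_tendsto_sqrt_smul_of_wronskian_ne_zero {q u₁ u₂ g₁ g₂ gt₁ gt₂ : ℝ → ℝ} {T L : ℝ}
    (hT : 0 < T) (hu₁ : HillSolutionOn q (Ioo 0 T) u₁) (hu₂ : HillSolutionOn q (Ioo 0 T) u₂)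
    (hW : ∀ t ∈ Ioo 0 T, wronskian u₁ u₂ t ≠ 0)
    (hsg₁ : ∀ᶠ ε in 𝓝[>] 0, HillSolutionOn q (Ioo 0 ε) g₁)
    (hsg₂ : ∀ᶠ ε in 𝓝[>] 0, HillSolutionOn q (Ioo 0 ε) g₂)
    (hWg : ∀ t ∈ Ioo 0 T, wronskian g₁ g₂ t ≠ 0)
    (hg₁ : ∀ t ∈ Ioo 0 T, g₁ t = t ^ ((3 : ℝ) / 2) * gt₁ t)
    (hg₂ : ∀ t ∈ Ioo 0 T, g₂ t = t ^ (-(1 : ℝ) / 2) * gt₂ t)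
    (hgt₁ : Tendsto gt₁ (𝓝[>] 0) (𝓝 L)) (hgt₂ : Tendsto gt₂ (𝓝[>] 0) (𝓝 1)) :
    ∃ β : ℝ × ℝ, β ≠ 0 ∧
      Tendsto (fun t => t ^ ((1 : ℝ) / 2) • (u₁ t, u₂ t)) (𝓝[>] 0) (𝓝 β) ∧
      ∀ a b : ℝ, a * β.1 + b * β.2 = 0 → Tendsto (fun t => a * u₁ t + b * u₂ t) (𝓝[>] 0) (𝓝 0) := by
  have hT0 : ∀ᶠ t in 𝓝[>] (0 : ℝ), t ∈ Ioo 0 T := Ioo_mem_nhdsGT hT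
  obtain ⟨ε, hεT, su₁, su₂, sg₁, sg₂⟩ := (hT0.and <| (hu₁.eventually_Ioo hT).and <|
    (hu₂.eventually_Ioo hT).and <| hsg₁.and hsg₂).exists
  have hc : ε / 2 ∈ Ioo 0 ε := ⟨by linarith [hεT.1], by linarith [hεT.1]⟩
  have hcT : ε / 2 ∈ Ioo 0 T := ⟨hc.1, hc.2.trans hεT.2⟩
  obtain ⟨α₁, β₁, h₁⟩ := su₁.exists_eqOn_linearCombination ordConnected_Ioo sg₁ sg₂ hc (hWg _ hcT)
  obtain ⟨α₂, β₂, h₂⟩ := su₂.exists_eqOn_linearCombination ordConnected_Ioo sg₁ sg₂ hc (hWg _ hcT)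
  have hε0 : ∀ᶠ t in 𝓝[>] (0 : ℝ), t ∈ Ioo 0 ε := Ioo_mem_nhdsGT hεT.1
  have hnhds : Ioo 0 ε ∈ 𝓝 (ε / 2) := isOpen_Ioo.mem_nhds hc
  refine ⟨(β₁, β₂), coeff_pair_ne_zero_of_wronskian_ne_zero (hW _ hcT)
      (eventually_of_mem hnhds h₁) (eventually_of_mem hnhds h₂),
    .prodMk_nhds
      (tendsto_sqrt_mul_of_eq_add (hε0.mono h₁) (hT0.mono hg₁) (hT0.mono hg₂) hgt₁ hgt₂)
      (tendsto_sqrt_mul_of_eq_add (hε0.mono h₂) (hT0.mono hg₁) (hT0.mono hg₂) hgt₁ hgt₂),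
    fun a b hab => ?_⟩
  refine tendsto_nhdsGT_zero_of_eq_rpow_mul (p := 3 / 2) (by norm_num) ?_
    (hgt₁.const_mul (a * α₁ + b * α₂))
  filter_upwards [hε0, hT0] with t ht htT
  rw [h₁ t ht, h₂ t ht, hg₁ t htT]
  linear_combination g₂ t * hab

/-- A self-intersection of a projective curve represented by a pair of independent
solutions of `u'' + q u = 0` with `q(t) = -3/(4t²) + q̃(t)` (q̃ continuous up to `0`),
forces the existence of a nontrivial solution vanishing both at `0` (in the limit) and
at the self-intersection time `t*`. Here the solutions `g₁, g₂` with prescribed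
asymptotics at the regular singular point are those provided by Bôcher's theorem. -/
theorem self_intersection_gives_vanishing_solution
    (T : ℝ) (hT : 0 < T) (q qt : ℝ → ℝ)
    (hq : ∀ t ∈ Set.Ioo 0 T, q t = -3 / (4 * t ^ 2) + qt t)
    (hqt : ContinuousOn qt (Set.Ico 0 T))
    (f : ℝ → Projectivization ℝ (ℝ × ℝ))
    (hf : ContinuousOn f (Set.Ico 0 T))
    (u₁ u₂ : ℝ → ℝ)
    (hu₁ : ContDiffOn ℝ 2 u₁ (Set.Ioo 0 T))
    (hu₂ : ContDiffOn ℝ 2 u₂ (Set.Ioo 0 T))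
    (hode₁ : ∀ t ∈ Set.Ioo 0 T, deriv (deriv u₁) t + q t * u₁ t = 0)
    (hode₂ : ∀ t ∈ Set.Ioo 0 T, deriv (deriv u₂) t + q t * u₂ t = 0)
    (hW : ∀ t ∈ Set.Ioo 0 T, u₁ t * deriv u₂ t - u₂ t * deriv u₁ t ≠ 0)
    (hrep : ∀ t ∈ Set.Ioo 0 T, ∃ h : ((u₁ t, u₂ t) : ℝ × ℝ) ≠ 0,
      f t = Projectivization.mk ℝ (u₁ t, u₂ t) h)
    (g₁ g₂ gt₁ gt₂ : ℝ → ℝ)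
    (hodeg₁ : ∀ t ∈ Set.Ioo 0 T, deriv (deriv g₁) t + q t * g₁ t = 0)
    (hodeg₂ : ∀ t ∈ Set.Ioo 0 T, deriv (deriv g₂) t + q t * g₂ t = 0)
    (hWg : ∀ t ∈ Set.Ioo 0 T, g₁ t * deriv g₂ t - g₂ t * deriv g₁ t ≠ 0)
    (hg₁ : ∀ t ∈ Set.Ioo 0 T, g₁ t = t ^ ((3 : ℝ) / 2) * gt₁ t)
    (hg₂ : ∀ t ∈ Set.Ioo 0 T, g₂ t = t ^ (-(1 : ℝ) / 2) * gt₂ t)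
    (hgt₁ : ContinuousOn gt₁ (Set.Ico 0 T))
    (hgt₂ : ContinuousOn gt₂ (Set.Ico 0 T))
    (hgt₁0 : gt₁ 0 = 1) (hgt₂0 : gt₂ 0 = 1)
    (tstar : ℝ) (hts : tstar ∈ Set.Ioo 0 T) (hself : f tstar = f 0) :
    ∃ u : ℝ → ℝ,
      (∃ t ∈ Set.Ioo 0 T, u t ≠ 0) ∧
      (∀ t ∈ Set.Ioo 0 T, deriv (deriv u) t + q t * u t = 0) ∧
      Filter.Tendsto u (nhdsWithin 0 (Set.Ioi 0)) (nhds 0) ∧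
      u tstar = 0 := by
  have hT0 : ∀ᶠ t in 𝓝[>] (0 : ℝ), t ∈ Ioo 0 T := Ioo_mem_nhdsGT hT
  have hlim {X : Type} [TopologicalSpace X] {h : ℝ → X} (hh : ContinuousOn h (Ico 0 T)) :
      Tendsto h (𝓝[>] 0) (𝓝 (h 0)) :=
    (hh 0 ⟨le_rfl, hT⟩).mono_of_mem_nhdsWithin (Ico_mem_nhdsGT hT)
  have hqneg : ∀ᶠ t in 𝓝[>] 0, q t < 0 :=
    eventually_neg_of_eq_neg_div_sq_add (c := 3 / 4) (by norm_num)
      (hT0.mono fun t ht => by rw [hq t ht]; ring) (hlim hqt)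
  obtain ⟨β, hβ, hlim_u, hvanish⟩ := exists_tendsto_sqrt_smul_of_wronskian_ne_zero hT
    (.of_contDiffOn isOpen_Ioo hu₁ hode₁) (.of_contDiffOn isOpen_Ioo hu₂ hode₂) hW
    (eventually_hillSolutionOn_Ioo_of_eq_rpow_mul hT hqneg hodeg₁ hg₁ hgt₁ (by simp [hgt₁0]))
    (eventually_hillSolutionOn_Ioo_of_eq_rpow_mul hT hqneg hodeg₂ hg₂ hgt₂ (by simp [hgt₂0]))
    hWg hg₁ hg₂ (hlim hgt₁) (hgt₂0 ▸ hlim hgt₂)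
  obtain ⟨hstar, hfstar⟩ := hrep tstar hts
  have hcross : u₁ tstar * β.2 - u₂ tstar * β.1 = 0 :=
    cross_eq_zero_of_tendsto_mk hstar hβ (hfstar ▸ hself ▸ hlim hf) (hT0.mono hrep)
      (hT0.mono fun t ht => (Real.rpow_pos_of_pos ht.1 _).ne') hlim_u
  refine ⟨fun t => u₂ tstar * u₁ t + -u₁ tstar * u₂ t, ?_, fun t ht => ?_,
    hvanish _ _ (by linear_combination -hcross), by ring⟩
  · by_contra! hzero
    refine hW tstar hts (wronskian_eq_zero_of_eventually_linearCombination_eq_zero ?_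
      (eventually_of_mem (isOpen_Ioo.mem_nhds hts) hzero))
    simpa [Prod.ext_iff, and_comm] using hstar
  · rw [deriv_deriv_linearCombination isOpen_Ioo hu₁ hu₂ _ _ ht]
    linear_combination u₂ tstar * hode₁ t ht - u₁ tstar * hode₂ t ht
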